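/- Let b_n be the coefficient of x^n in x^9(1+x^2)/((1−x)^3(1+x+x^2)). Then b_n / (n^2/3) tends to 1 as n → ∞. -/

import Mathlib

/-!
Since `(1 - x)³(1 + x + x²) = (1 - x)²(1 - x³)`, the coefficients are a quadratic in `n` plus a
`3`-periodic correction: for `n ≥ 9`, `b n = ((n - 7)(n - 8) + [3 ∣ n]) / 3`. Hence
`b n - n² / 3 = O(n)`, which is `o(n²)`.
-/

open PowerSeries Filter Asymptotics

theorem PowerSeries.mk_mul_one_sub_X_pow {R : Type*} [CommRing R] (c : ℕ → R) (k : ℕ) :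
    mk c * (1 - X ^ k) = mk fun n => c n - if k ≤ n then c (n - k) else 0 := by
  ext n
  simp [mul_sub, coeff_mul_X_pow']

def levelThreeCount (n : ℕ) : ℚ :=
  if n < 9 then 0 else (((n : ℚ) - 7) * (n - 8) + if 3 ∣ n then 1 else 0) / 3

/-- `1 - X³` removes the `3`-periodic part of the count, leaving a sequence that is linear from
`n = 10` on, which `(1 - X)²` annihilates. -/
theorem mk_levelThreeCount_mul :
    mk levelThreeCount * ((1 - X) ^ 2 * (1 - X ^ 3)) = X ^ 9 * (1 + X ^ 2) := by
  have hperiodic : mk levelThreeCount * (1 - X ^ 3) =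
      mk fun n => if n < 9 then 0 else if n = 9 then 1 else 2 * (n : ℚ) - 18 := by
    rw [mk_mul_one_sub_X_pow]
    congr 1
    ext n
    obtain hn | ⟨m, rfl⟩ : n < 12 ∨ ∃ m, n = m + 12 :=
      (lt_or_ge n 12).imp_right fun h => ⟨n - 12, by omega⟩
    · interval_cases n <;> norm_num [levelThreeCount]
    · have h3 : 3 ∣ m + 12 ↔ 3 ∣ m + 9 := by omega
      simp only [levelThreeCount, show m + 12 - 3 = m + 9 by omega, h3]
      simp (disch := omega) only [if_neg, if_pos]
      push_cast
      ring
  have hlinear : (mk fun n => if n < 9 then 0 else if n = 9 then 1 else 2 * (n : ℚ) - 18) *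
      (1 - X ^ 1) * (1 - X ^ 1) = X ^ 9 * (1 + X ^ 2) := by
    rw [mk_mul_one_sub_X_pow, mk_mul_one_sub_X_pow]
    ext n
    simp only [coeff_mk, mul_add, mul_one, ← pow_add, map_add, coeff_X_pow]
    obtain hn | ⟨m, rfl⟩ : n < 12 ∨ ∃ m, n = m + 12 :=
      (lt_or_ge n 12).imp_right fun h => ⟨n - 12, by omega⟩
    · interval_cases n <;> norm_num
    · simp (disch := omega) only [if_neg, if_pos, show m + 12 - 1 = m + 11 by omega]
      push_cast
      ring
  rw [← hlinear, ← hperiodic]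
  ring

theorem coeff_levelThreeCount (n : ℕ) :
    coeff n (X ^ 9 * (1 + X ^ 2) * (((1 - X) ^ 3)⁻¹ * (1 + X + X ^ 2)⁻¹) : ℚ⟦X⟧) =
      levelThreeCount n := by
  have hden : ((1 + X + X ^ 2) * (1 - X) ^ 3 : ℚ⟦X⟧) = (1 - X) ^ 2 * (1 - X ^ 3) := by ring
  rw [← PowerSeries.mul_inv_rev, hden,
    ← (eq_mul_inv_iff_mul_eq (by simp)).2 mk_levelThreeCount_mul, coeff_mk]

theorem levelThreeCount_sub_isBigO :
    (fun n => (levelThreeCount n : ℝ) - (n : ℝ) ^ 2 / 3) =O[atTop] fun n => (n : ℝ) := by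
  refine .of_bound 10 ?_
  filter_upwards [eventually_ge_atTop 9] with n hn
  have hn' : (9 : ℝ) ≤ n := by exact_mod_cast hn
  rw [levelThreeCount, if_neg (by omega), Real.norm_eq_abs, Real.norm_eq_abs, Nat.abs_cast,
    abs_le]
  constructor <;> split_ifs <;> push_cast <;> nlinarith

theorem levelThreeCount_isEquivalent :
    (fun n => (levelThreeCount n : ℝ)) ~[atTop] fun n => (n : ℝ) ^ 2 / 3 := by
  refine IsLittleO.isEquivalent (levelThreeCount_sub_isBigO.trans_isLittleO ?_)
  have h := (isLittleO_pow_pow_atTop_of_lt (𝕜 := ℝ) one_lt_two).comp_tendsto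
    tendsto_natCast_atTop_atTop
  simpa [Function.comp_def, div_eq_inv_mul] using h.const_mul_right' (c := (3 : ℝ)⁻¹) (by simp)

/-- If `b n` is the coefficient of `x^n` in `x^9(1+x^2)/((1-x)^3(1+x+x^2))`, then
`b n / (n^2/3) → 1` as `n → ∞`. -/
theorem level3_asymptotics (b : ℕ → ℚ)
    (hb : ∀ n, b n = PowerSeries.coeff (R := ℚ) n
      (PowerSeries.X ^ 9 * (1 + PowerSeries.X ^ 2) *
        (((1 - PowerSeries.X) ^ 3)⁻¹ * (1 + PowerSeries.X + PowerSeries.X ^ 2)⁻¹))) :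
    Tendsto (fun n : ℕ => (b n : ℝ) / ((n : ℝ) ^ 2 / 3)) atTop (nhds 1) := by
  simp only [hb, coeff_levelThreeCount]
  refine (isEquivalent_iff_tendsto_one ?_).mp levelThreeCount_isEquivalent
  filter_upwards [eventually_ne_atTop 0] with n hn
  positivity
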